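/- A rate point (r1,r2) belongs to the individual-outage region for instantaneous CSI (i.e., there exists a stochastic beamforming mapping meeting both individual outage constraints via the five-case scheme) if and only if the three scalar conditions hold: ε1 ≥ P{r1 > R1SU(H)}, ε2 ≥ P{r2 > R2SU(H)}, and ε1 + ε2 ≥ P{r1 > R1SU(H)}·P{r2 > R2SU(H)} + P{(r1,r2) ∉ R(H)}. -/
import Mathlib


open MeasureTheory Set

/-- A rate point lies in the individual-outage region for instantaneous CSI
(existence of a coin bias `p ∈ [0,1]` making both individual outage
constraints feasible in the five-case scheme) iff the three scalar
conditions on `ε1`, `ε2` hold. -/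
theorem individual_outage_region_characterization {Ω : Type*}
    [MeasurableSpace Ω] (μ : Measure Ω) [IsProbabilityMeasure μ]
    (R1SU R2SU : Ω → ℝ) (h1 : Measurable R1SU) (h2 : Measurable R2SU)
    (hindep : ProbabilityTheory.IndepFun R1SU R2SU μ)
    (Rset : Ω → Set (ℝ × ℝ)) (r1 r2 ε1 ε2 : ℝ)
    (hε1 : ε1 ∈ Set.Ioo (0:ℝ) 1) (hε2 : ε2 ∈ Set.Ioo (0:ℝ) 1)
    (hBmeas : MeasurableSet {ω | (r1, r2) ∈ Rset ω})
    (hBsub : ∀ ω, (r1, r2) ∈ Rset ω → r1 ≤ R1SU ω ∧ r2 ≤ R2SU ω) :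
    (∃ p : ℝ, p ∈ Set.Icc (0:ℝ) 1 ∧
        1 - ε1 - (μ {ω | (r1, r2) ∈ Rset ω}).toReal
          - (μ {ω | r1 ≤ R1SU ω ∧ r2 > R2SU ω}).toReal
          ≤ p * (μ {ω | r1 ≤ R1SU ω ∧ r2 ≤ R2SU ω ∧ (r1, r2) ∉ Rset ω}).toReal ∧
        p * (μ {ω | r1 ≤ R1SU ω ∧ r2 ≤ R2SU ω ∧ (r1, r2) ∉ Rset ω}).toReal
          ≤ (μ {ω | (r1, r2) ∈ Rset ω}).toReal
            + (μ {ω | r1 > R1SU ω ∧ r2 ≤ R2SU ω}).toReal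
            + (μ {ω | r1 ≤ R1SU ω ∧ r2 ≤ R2SU ω ∧ (r1, r2) ∉ Rset ω}).toReal
            - 1 + ε2) ↔
    (ε1 ≥ (μ {ω | r1 > R1SU ω}).toReal ∧
     ε2 ≥ (μ {ω | r2 > R2SU ω}).toReal ∧
     ε1 + ε2 ≥ (μ {ω | r1 > R1SU ω}).toReal * (μ {ω | r2 > R2SU ω}).toReal
        + (μ {ω | (r1, r2) ∉ Rset ω}).toReal) := by
  classical
  set S1 : Set Ω := {ω | r1 ≤ R1SU ω} with hS1def
  set S2 : Set Ω := {ω | r2 ≤ R2SU ω} with hS2def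
  set B : Set Ω := {ω | (r1, r2) ∈ Rset ω} with hBdef
  have hS1 : MeasurableSet S1 := measurableSet_le measurable_const h1
  have hS2 : MeasurableSet S2 := measurableSet_le measurable_const h2
  have hsub : B ⊆ S1 ∩ S2 := fun ω hω => hBsub ω hω
  -- rewrite the sets in the goal in terms of S1, S2, B
  have sC1 : {ω | r1 ≤ R1SU ω ∧ r2 > R2SU ω} = S1 ∩ S2ᶜ := by
    ext ω; simp [hS1def, hS2def, not_le]
  have sC2 : {ω | r1 > R1SU ω ∧ r2 ≤ R2SU ω} = S1ᶜ ∩ S2 := by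
    ext ω; simp [hS1def, hS2def, not_le]
  have sD : {ω | r1 ≤ R1SU ω ∧ r2 ≤ R2SU ω ∧ (r1, r2) ∉ Rset ω}
      = (S1 ∩ S2) \ B := by
    ext ω; simp [hS1def, hS2def, hBdef, and_assoc]
  have sA1 : {ω | r1 > R1SU ω} = S1ᶜ := by
    ext ω; simp [hS1def, not_le]
  have sA2 : {ω | r2 > R2SU ω} = S2ᶜ := by
    ext ω; simp [hS2def, not_le]
  have sNB : {ω | (r1, r2) ∉ Rset ω} = Bᶜ := rfl
  rw [sC1, sC2, sD, sA1, sA2, sNB]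
  -- finiteness
  have fin : ∀ s : Set Ω, μ s ≠ ⊤ := fun s => measure_ne_top μ s
  -- ENNReal identities
  have E1 : μ (S1ᶜ ∩ S2) + μ (S1ᶜ ∩ S2ᶜ) = μ S1ᶜ := by
    have := measure_inter_add_diff (μ := μ) S1ᶜ hS2
    rwa [diff_eq] at this
  have E2 : μ (S1 ∩ S2ᶜ) + μ (S1ᶜ ∩ S2ᶜ) = μ S2ᶜ := by
    have := measure_inter_add_diff (μ := μ) S2ᶜ hS1
    rwa [diff_eq, inter_comm S2ᶜ S1, inter_comm S2ᶜ S1ᶜ] at this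
  have E3 : μ (S1 ∩ S2) + μ (S1 ∩ S2ᶜ) = μ S1 := by
    have := measure_inter_add_diff (μ := μ) S1 hS2
    rwa [diff_eq] at this
  have E4 : μ S1 + μ S1ᶜ = 1 := by
    rw [measure_add_measure_compl hS1, measure_univ]
  have E5 : μ B + μ ((S1 ∩ S2) \ B) = μ (S1 ∩ S2) := by
    have := measure_inter_add_diff (μ := μ) (S1 ∩ S2) hBmeas
    rwa [Set.inter_eq_right.mpr hsub] at this
  have E6 : μ B + μ Bᶜ = 1 := by
    rw [measure_add_measure_compl hBmeas, measure_univ]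
  have E7 : μ (S1ᶜ ∩ S2ᶜ) = μ S1ᶜ * μ S2ᶜ := by
    have hpre1 : S1ᶜ = R1SU ⁻¹' (Iio r1) := by ext ω; simp [hS1def, not_le]
    have hpre2 : S2ᶜ = R2SU ⁻¹' (Iio r2) := by ext ω; simp [hS2def, not_le]
    rw [hpre1, hpre2]
    exact hindep.measure_inter_preimage_eq_mul _ _ measurableSet_Iio measurableSet_Iio
  -- pass to real numbers
  set pa := (μ (S1ᶜ ∩ S2ᶜ)).toReal with hpa
  set pb := (μ B).toReal with hpb
  set pc1 := (μ (S1 ∩ S2ᶜ)).toReal with hpc1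
  set pc2 := (μ (S1ᶜ ∩ S2)).toReal with hpc2
  set pd := (μ ((S1 ∩ S2) \ B)).toReal with hpd
  set a := (μ S1ᶜ).toReal with ha
  set c := (μ S2ᶜ).toReal with hc
  set nb := (μ Bᶜ).toReal with hnb
  have R1e : pc2 + pa = a := by
    rw [hpc2, hpa, ha, ← ENNReal.toReal_add (fin _) (fin _), E1]
  have R2e : pc1 + pa = c := by
    rw [hpc1, hpa, hc, ← ENNReal.toReal_add (fin _) (fin _), E2]
  have R3e : (μ (S1 ∩ S2)).toReal + pc1 = (μ S1).toReal := by
    rw [hpc1, ← ENNReal.toReal_add (fin _) (fin _), E3]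
  have R4e : (μ S1).toReal + a = 1 := by
    rw [ha, ← ENNReal.toReal_add (fin _) (fin _), E4, ENNReal.toReal_one]
  have R5e : pb + pd = (μ (S1 ∩ S2)).toReal := by
    rw [hpb, hpd, ← ENNReal.toReal_add (fin _) (fin _), E5]
  have R6e : pb + nb = 1 := by
    rw [hpb, hnb, ← ENNReal.toReal_add (fin _) (fin _), E6, ENNReal.toReal_one]
  have R7e : pa = a * c := by
    rw [hpa, ha, hc, E7, ENNReal.toReal_mul]
  have hpd0 : 0 ≤ pd := ENNReal.toReal_nonneg
  have hsum : pa + pb + pc1 + pc2 + pd = 1 := by linarith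
  constructor
  · rintro ⟨p, ⟨hp0, hp1⟩, hL, hU⟩
    have h1 : p * pd ≤ pd := mul_le_of_le_one_left hpd0 hp1
    have h2 : 0 ≤ p * pd := mul_nonneg hp0 hpd0
    refine ⟨by linarith, by linarith, by linarith⟩
  · rintro ⟨hA, hB2, hC⟩
    rcases eq_or_lt_of_le hpd0 with hpdz | hpdpos
    · refine ⟨0, ⟨le_refl 0, zero_le_one⟩, ?_, ?_⟩ <;> linarith
    · refine ⟨max (1 - ε1 - pb - pc1) 0 / pd, ⟨?_, ?_⟩, ?_, ?_⟩
      · exact div_nonneg (le_max_right _ _) hpd0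
      · rw [div_le_one hpdpos]
        refine max_le (by linarith) hpd0
      · rw [div_mul_cancel₀ _ (ne_of_gt hpdpos)]
        exact le_max_left _ _
      · rw [div_mul_cancel₀ _ (ne_of_gt hpdpos)]
        refine max_le (by linarith) (by linarith)
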